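/- In any orthomodular lattice, if a commutes with b and a commutes with c, then a ∪₁ (b ∩₁ c) = (a ∪₁ b) ∩₁ (a ∪₁ c), where x ∪₁ y := x ∪ (x' ∩ y) and x ∩₁ y := x ∩ (x' ∪ y). -/

import Mathlib

class Ortholattice (α : Type*) extends Lattice α, BoundedOrder α, Compl α where
  compl_compl : ∀ a : α, aᶜᶜ = a
  sup_compl : ∀ a : α, a ⊔ aᶜ = ⊤
  inf_compl : ∀ a : α, a ⊓ aᶜ = ⊥
  compl_antitone : ∀ a b : α, a ≤ b → bᶜ ≤ aᶜ

class OrthomodularLattice (α : Type*) extends Ortholattice α where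
  orthomodular : ∀ a b : α, a ≤ b → b = a ⊔ (aᶜ ⊓ b)

namespace OMLaux

variable {α : Type*} [OrthomodularLattice α]

lemma cc (a : α) : aᶜᶜ = a := Ortholattice.compl_compl a

lemma c_anti {a b : α} (h : a ≤ b) : bᶜ ≤ aᶜ := Ortholattice.compl_antitone a b h

lemma le_of_c_le {a b : α} (h : bᶜ ≤ aᶜ) : a ≤ b := by
  have := c_anti h; rwa [cc, cc] at this

lemma compl_inj {a b : α} (h : aᶜ = bᶜ) : a = b := by
  rw [← cc a, h, cc]

lemma compl_sup (a b : α) : (a ⊔ b)ᶜ = aᶜ ⊓ bᶜ := by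
  apply le_antisymm
  · exact le_inf (c_anti le_sup_left) (c_anti le_sup_right)
  · apply le_of_c_le
    rw [cc]
    exact sup_le (le_of_c_le (by rw [cc]; exact inf_le_left))
      (le_of_c_le (by rw [cc]; exact inf_le_right))

lemma compl_inf (a b : α) : (a ⊓ b)ᶜ = aᶜ ⊔ bᶜ := by
  apply compl_inj
  rw [cc, compl_sup, cc, cc]

/-- If x ≤ b then b ⊓ (x ⊔ bᶜ) = x (Sasaki-style consequence of orthomodularity). -/
lemma sasaki {x b : α} (h : x ≤ b) : b ⊓ (x ⊔ bᶜ) = x := by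
  apply compl_inj
  rw [compl_inf, compl_sup, cc]
  have := OrthomodularLattice.orthomodular bᶜ xᶜ (c_anti h)
  rw [cc] at this
  rw [inf_comm b xᶜ] at this
  exact this.symm

/-- a commutes with b. -/
def Cm (a b : α) : Prop := a = (a ⊓ b) ⊔ (a ⊓ bᶜ)

lemma Cm_compl_right {a b : α} (h : Cm a b) : Cm a bᶜ := by
  unfold Cm at *
  rw [cc, sup_comm]
  exact h

lemma Cm_symm {a b : α} (h : Cm a b) : Cm b a := by
  unfold Cm at *
  have h1 : a ⊔ bᶜ = (a ⊓ b) ⊔ bᶜ := by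
    conv_lhs => rw [h]
    rw [sup_assoc, sup_eq_right.mpr (inf_le_right : a ⊓ bᶜ ≤ bᶜ)]
  have h2 : b ⊓ (a ⊔ bᶜ) = a ⊓ b := by
    rw [h1]; exact sasaki inf_le_right
  have hle : (a ⊓ b) ⊔ (aᶜ ⊓ b) ≤ b := sup_le inf_le_right inf_le_right
  have hom := OrthomodularLattice.orthomodular _ b hle
  have hz : ((a ⊓ b) ⊔ (aᶜ ⊓ b))ᶜ ⊓ b = ⊥ := by
    apply le_antisymm _ bot_le
    have e1 : ((a ⊓ b) ⊔ (aᶜ ⊓ b))ᶜ = (aᶜ ⊔ bᶜ) ⊓ (a ⊔ bᶜ) := by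
      rw [compl_sup, compl_inf, compl_inf, cc]
    rw [e1]
    have z1 : (aᶜ ⊔ bᶜ) ⊓ (a ⊔ bᶜ) ⊓ b ≤ a ⊓ b := by
      rw [← h2]
      exact le_inf inf_le_right (inf_le_left.trans inf_le_right)
    have z2 : (aᶜ ⊔ bᶜ) ⊓ (a ⊔ bᶜ) ⊓ b ≤ (a ⊓ b)ᶜ := by
      rw [compl_inf]
      exact inf_le_left.trans inf_le_left
    calc (aᶜ ⊔ bᶜ) ⊓ (a ⊔ bᶜ) ⊓ b ≤ (a ⊓ b) ⊓ (a ⊓ b)ᶜ := le_inf z1 z2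
      _ = ⊥ := Ortholattice.inf_compl _
  rw [hz, sup_bot_eq] at hom
  rw [inf_comm b a, inf_comm b aᶜ]
  exact hom

lemma Cm_compl_left {a b : α} (h : Cm a b) : Cm aᶜ b :=
  Cm_symm (Cm_compl_right (Cm_symm h))

lemma inf_of_Cm {a b : α} (h : Cm a b) : a ⊓ (aᶜ ⊔ b) = a ⊓ b := by
  have hba := Cm_symm h
  have h1 : aᶜ ⊔ b = (a ⊓ b) ⊔ aᶜ := by
    apply le_antisymm
    · apply sup_le le_sup_right
      conv_lhs => rw [hba]
      exact sup_le (le_sup_left.trans' (by rw [inf_comm])) (le_sup_right.trans' inf_le_right)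
    · exact sup_le (inf_le_right.trans le_sup_right) le_sup_left
  rw [h1]
  exact sasaki inf_le_left

lemma Cm_of_inf {a b : α} (h : a ⊓ (aᶜ ⊔ b) = a ⊓ b) : Cm a b := by
  have hle : (a ⊓ b) ⊔ (a ⊓ bᶜ) ≤ a := sup_le inf_le_left inf_le_left
  have hom := OrthomodularLattice.orthomodular _ a hle
  have hz : ((a ⊓ b) ⊔ (a ⊓ bᶜ))ᶜ ⊓ a = ⊥ := by
    apply le_antisymm _ bot_le
    have e1 : ((a ⊓ b) ⊔ (a ⊓ bᶜ))ᶜ = (aᶜ ⊔ bᶜ) ⊓ (aᶜ ⊔ b) := by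
      rw [compl_sup, compl_inf, compl_inf, cc]
    rw [e1]
    have z1 : (aᶜ ⊔ bᶜ) ⊓ (aᶜ ⊔ b) ⊓ a ≤ a ⊓ b := by
      rw [← h]
      exact le_inf inf_le_right (inf_le_left.trans inf_le_right)
    have z2 : (aᶜ ⊔ bᶜ) ⊓ (aᶜ ⊔ b) ⊓ a ≤ (a ⊓ b)ᶜ := by
      rw [compl_inf]
      exact inf_le_left.trans inf_le_left
    calc (aᶜ ⊔ bᶜ) ⊓ (aᶜ ⊔ b) ⊓ a ≤ (a ⊓ b) ⊓ (a ⊓ b)ᶜ := le_inf z1 z2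
      _ = ⊥ := Ortholattice.inf_compl _
  rw [hz, sup_bot_eq] at hom
  exact hom

lemma sup_of_Cm {a b : α} (h : Cm a b) : a ⊔ (aᶜ ⊓ b) = a ⊔ b := by
  have hba := Cm_symm h
  conv_rhs => rw [hba]
  rw [← sup_assoc, sup_eq_left.mpr (inf_le_right : b ⊓ a ≤ a), inf_comm b aᶜ]

lemma Cm_inf {a b c : α} (hb : Cm a b) (hc : Cm a c) : Cm a (b ⊓ c) := by
  apply Cm_of_inf
  apply le_antisymm
  · have h1 : a ⊓ (aᶜ ⊔ b ⊓ c) ≤ a ⊓ b := by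
      rw [← inf_of_Cm hb]
      exact inf_le_inf_left a (sup_le le_sup_left (inf_le_left.trans le_sup_right))
    have h2 : a ⊓ (aᶜ ⊔ b ⊓ c) ≤ a ⊓ c := by
      rw [← inf_of_Cm hc]
      exact inf_le_inf_left a (sup_le le_sup_left (inf_le_right.trans le_sup_right))
    exact le_inf inf_le_left (le_inf (h1.trans inf_le_right) (h2.trans inf_le_right))
  · exact le_inf inf_le_left (inf_le_right.trans le_sup_right)

lemma Cm_sup {a b c : α} (hb : Cm a b) (hc : Cm a c) : Cm a (b ⊔ c) := by
  have h := Cm_compl_right (Cm_inf (Cm_compl_right hb) (Cm_compl_right hc))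
  rwa [compl_inf, cc, cc] at h

/-- Foulis–Holland distributivity. -/
lemma FH {a b c : α} (hb : Cm a b) (hc : Cm a c) :
    (a ⊔ b) ⊓ (a ⊔ c) = a ⊔ (b ⊓ c) := by
  have hle : a ⊔ (b ⊓ c) ≤ (a ⊔ b) ⊓ (a ⊔ c) :=
    le_inf (sup_le le_sup_left (inf_le_left.trans le_sup_right))
      (sup_le le_sup_left (inf_le_right.trans le_sup_right))
  have hom := OrthomodularLattice.orthomodular _ _ hle
  have hz : (a ⊔ b ⊓ c)ᶜ ⊓ ((a ⊔ b) ⊓ (a ⊔ c)) = ⊥ := by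
    apply le_antisymm _ bot_le
    have e1 : (a ⊔ b ⊓ c)ᶜ = aᶜ ⊓ (b ⊓ c)ᶜ := compl_sup _ _
    have hab' : aᶜ ⊓ (a ⊔ b) = aᶜ ⊓ b := by
      have := inf_of_Cm (Cm_compl_left hb); rwa [cc] at this
    have hac' : aᶜ ⊓ (a ⊔ c) = aᶜ ⊓ c := by
      have := inf_of_Cm (Cm_compl_left hc); rwa [cc] at this
    have zb : (a ⊔ b ⊓ c)ᶜ ⊓ ((a ⊔ b) ⊓ (a ⊔ c)) ≤ b := by
      have : (a ⊔ b ⊓ c)ᶜ ⊓ ((a ⊔ b) ⊓ (a ⊔ c)) ≤ aᶜ ⊓ (a ⊔ b) :=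
        le_inf (by rw [e1]; exact inf_le_left.trans inf_le_left)
          (inf_le_right.trans inf_le_left)
      rw [hab'] at this
      exact this.trans inf_le_right
    have zc : (a ⊔ b ⊓ c)ᶜ ⊓ ((a ⊔ b) ⊓ (a ⊔ c)) ≤ c := by
      have : (a ⊔ b ⊓ c)ᶜ ⊓ ((a ⊔ b) ⊓ (a ⊔ c)) ≤ aᶜ ⊓ (a ⊔ c) :=
        le_inf (by rw [e1]; exact inf_le_left.trans inf_le_left)
          (inf_le_right.trans inf_le_right)
      rw [hac'] at this
      exact this.trans inf_le_right
    have zn : (a ⊔ b ⊓ c)ᶜ ⊓ ((a ⊔ b) ⊓ (a ⊔ c)) ≤ (b ⊓ c)ᶜ := by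
      rw [e1]; exact inf_le_left.trans inf_le_right
    calc (a ⊔ b ⊓ c)ᶜ ⊓ ((a ⊔ b) ⊓ (a ⊔ c)) ≤ (b ⊓ c) ⊓ (b ⊓ c)ᶜ :=
        le_inf (le_inf zb zc) zn
      _ = ⊥ := Ortholattice.inf_compl _
  rw [hz, sup_bot_eq] at hom
  exact hom

end OMLaux

open OMLaux in
theorem stmt9 {α : Type*} [OrthomodularLattice α] (a b c : α) (hab : a = (a ⊓ b) ⊔ (a ⊓ bᶜ)) (hac : a = (a ⊓ c) ⊔ (a ⊓ cᶜ)) :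
    a ⊔ (aᶜ ⊓ (b ⊓ (bᶜ ⊔ c))) = (a ⊔ (aᶜ ⊓ b)) ⊓ ((a ⊔ (aᶜ ⊓ b))ᶜ ⊔ (a ⊔ (aᶜ ⊓ c))) := by
  have hb : Cm a b := hab
  have hc : Cm a c := hac
  have hb' : Cm a bᶜ := Cm_compl_right hb
  have hbc : Cm a (bᶜ ⊔ c) := Cm_sup hb' hc
  have hd : Cm a (b ⊓ (bᶜ ⊔ c)) := Cm_inf hb hbc
  rw [sup_of_Cm hd, sup_of_Cm hb, sup_of_Cm hc, OMLaux.compl_sup]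
  have key : (aᶜ ⊓ bᶜ) ⊔ (a ⊔ c) = a ⊔ (bᶜ ⊔ c) := by
    rw [sup_comm (aᶜ ⊓ bᶜ) (a ⊔ c), sup_assoc a c (aᶜ ⊓ bᶜ), sup_comm c (aᶜ ⊓ bᶜ),
      ← sup_assoc a (aᶜ ⊓ bᶜ) c, sup_of_Cm hb', sup_assoc]
  rw [key, FH hb hbc]
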